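/- For q ∈ [0,1] and any symmetric measurable W : [0,1]² → [0,1]: t(K₃, (2q − W)₊) ≥ 2q³ − t(K₃, W), where (y)₊ = max(y,0) and t(K₃, U) = ∫∫∫ U(x,y)U(x,z)U(y,z) dx dy dz. -/

import Mathlib

/-!
Cut `W` at height `2q`: for `V = min W (2q)` one has `(2q - W)₊ = 2q - V` and `t(V) ≤ t(W)`.
For a bounded symmetric kernel `V` with degree function `d`, Goodman's identity
`t(c - V) + t(V) = c (c² - 3c ∫ d + 3 ∫ d²)` comes from the pointwise identity
`(c - a)(c - b)(c - e) + abe = c ((c - a)(c - b - e) + eb)`, integrated one vertex at a time,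
symmetry turning both `∫∫ V(x,y) V(x,z)` and `∫∫ V(x,y) d(y)` into `∫ d²`.
Since `(∫ d)² ≤ ∫ d²`, the right side is at least `c³/4 + 3c (∫ d - c/2)² ≥ c³/4`,
which is `2q³` for `c = 2q`.
-/

open MeasureTheory Real

noncomputable section

def I01 : Set ℝ := Set.Icc 0 1

/-- Triangle density of a kernel `W`. -/
def tK3 (W : ℝ → ℝ → ℝ) : ℝ :=
  ∫ x in I01, ∫ y in I01, ∫ z in I01, W x y * W x z * W y z

open Function ProbabilityTheory

section Integration

variable {α : Type*} [MeasurableSpace α] {μ : Measure α}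

lemma Measurable.integrable_of_norm_le [IsFiniteMeasure μ] {f : α → ℝ} (hf : Measurable f)
    {C : ℝ} (hfC : ∀ x, ‖f x‖ ≤ C) : Integrable f μ :=
  .of_bound hf.aestronglyMeasurable C (.of_forall hfC)

lemma norm_integral_le_of_forall_norm_le [IsProbabilityMeasure μ] {f : α → ℝ} {C : ℝ}
    (hfC : ∀ x, ‖f x‖ ≤ C) : ‖∫ x, f x ∂μ‖ ≤ C := by
  simpa using norm_integral_le_of_norm_le_const (μ := μ) (.of_forall hfC)

lemma measurable_integral_right {β : Type*} [MeasurableSpace β] {ν : Measure β} [SFinite ν]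
    {F : α → β → ℝ} (hF : Measurable (uncurry F)) : Measurable fun x ↦ ∫ y, F x y ∂ν :=
  hF.stronglyMeasurable.integral_prod_right.measurable

lemma integral_prod_prod {β γ : Type*} [MeasurableSpace β] [MeasurableSpace γ] [SFinite μ]
    {ν : Measure β} {ρ : Measure γ} [SFinite ν] [SFinite ρ] {F : α × β × γ → ℝ}
    (hF : Integrable F (μ.prod (ν.prod ρ))) :
    ∫ p, F p ∂(μ.prod (ν.prod ρ)) = ∫ x, ∫ y, ∫ z, F (x, y, z) ∂ρ ∂ν ∂μ := by
  rw [integral_prod _ hF]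
  refine integral_congr_ae ?_
  filter_upwards [hF.prod_right_ae] with x hx
  exact integral_prod _ hx

lemma sq_integral_le_integral_sq [IsProbabilityMeasure μ] {f : α → ℝ} (hf : MemLp f 2 μ) :
    (∫ x, f x ∂μ) ^ 2 ≤ ∫ x, f x ^ 2 ∂μ := by
  have := variance_nonneg f μ
  rw [variance_eq_sub hf] at this
  simpa [sub_nonneg] using this

end Integration

namespace Graphon

variable {α : Type*} [MeasurableSpace α] {μ : Measure α} [IsProbabilityMeasure μ]
  {V : α → α → ℝ} {C : ℝ}

def triangleDensity (μ : Measure α) (V : α → α → ℝ) : ℝ :=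
  ∫ x, ∫ y, ∫ z, V x y * V x z * V y z ∂μ ∂μ ∂μ

def degree (μ : Measure α) (V : α → α → ℝ) (x : α) : ℝ :=
  ∫ y, V x y ∂μ

lemma integrable_section (hV : Measurable (uncurry V)) (hVC : ∀ x y, ‖V x y‖ ≤ C) (x : α) :
    Integrable (V x) μ :=
  Measurable.integrable_of_norm_le (by fun_prop) (hVC x)

lemma measurable_degree (hV : Measurable (uncurry V)) : Measurable (degree μ V) :=
  measurable_integral_right hV

lemma norm_degree_le (hVC : ∀ x y, ‖V x y‖ ≤ C) (x : α) : ‖degree μ V x‖ ≤ C :=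
  norm_integral_le_of_forall_norm_le (hVC x)

lemma integrable_degree (hV : Measurable (uncurry V)) (hVC : ∀ x y, ‖V x y‖ ≤ C) :
    Integrable (degree μ V) μ :=
  (measurable_degree hV).integrable_of_norm_le (norm_degree_le hVC)

lemma integrable_triangle (hV : Measurable (uncurry V)) (hVC : ∀ x y, ‖V x y‖ ≤ C) :
    Integrable (fun p : α × α × α ↦ V p.1 p.2.1 * V p.1 p.2.2 * V p.2.1 p.2.2)
      (μ.prod (μ.prod μ)) :=
  Measurable.integrable_of_norm_le (by fun_prop) fun _ ↦
    norm_mul_le_of_le (norm_mul_le_of_le (hVC _ _) (hVC _ _)) (hVC _ _)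

lemma triangleDensity_eq_integral_prod (hV : Measurable (uncurry V))
    (hVC : ∀ x y, ‖V x y‖ ≤ C) :
    triangleDensity μ V =
      ∫ p, V p.1 p.2.1 * V p.1 p.2.2 * V p.2.1 p.2.2 ∂(μ.prod (μ.prod μ)) :=
  (integral_prod_prod (integrable_triangle hV hVC)).symm

lemma triangleDensity_mono {A B : α → α → ℝ} (hA : Measurable (uncurry A))
    (hB : Measurable (uncurry B)) (hA0 : ∀ x y, 0 ≤ A x y) (hAB : ∀ x y, A x y ≤ B x y)
    (hBC : ∀ x y, ‖B x y‖ ≤ C) :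
    triangleDensity μ A ≤ triangleDensity μ B := by
  have hB0 x y : 0 ≤ B x y := (hA0 x y).trans (hAB x y)
  have hAC x y : ‖A x y‖ ≤ C := by
    rw [Real.norm_of_nonneg (hA0 x y)]
    exact (hAB x y).trans ((Real.le_norm_self _).trans (hBC x y))
  rw [triangleDensity_eq_integral_prod hA hAC, triangleDensity_eq_integral_prod hB hBC]
  refine integral_mono (integrable_triangle hA hAC) (integrable_triangle hB hBC) fun p ↦ ?_
  exact mul_le_mul (mul_le_mul (hAB _ _) (hAB _ _) (hA0 _ _) (hB0 _ _)) (hAB _ _) (hA0 _ _)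
    (mul_nonneg (hB0 _ _) (hB0 _ _))

lemma integral_integral_mul_eq_integral_mul_degree (hV : Measurable (uncurry V))
    (hVC : ∀ x y, ‖V x y‖ ≤ C) (hsymm : ∀ x y, V x y = V y x) {f : α → ℝ} {D : ℝ}
    (hf : Measurable f) (hfD : ∀ y, ‖f y‖ ≤ D) :
    ∫ x, ∫ y, V x y * f y ∂μ ∂μ = ∫ y, f y * degree μ V y ∂μ := by
  rw [integral_integral_swap (f := fun x y ↦ V x y * f y) (Measurable.integrable_of_norm_le
    (by fun_prop) fun p ↦ norm_mul_le_of_le (hVC p.1 p.2) (hfD p.2))]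
  refine integral_congr_ae (.of_forall fun y ↦ ?_)
  simp only [integral_mul_const, degree, hsymm _ y, mul_comm]

lemma integral_goodman_inner (hV : Measurable (uncurry V)) (hVC : ∀ x y, ‖V x y‖ ≤ C)
    (c : ℝ) (x y : α) :
    ∫ z, (c - V x y) * (c - V x z - V y z) + V y z * V x z ∂μ =
      (c - V x y) * (c - degree μ V x - degree μ V y) + ∫ z, V y z * V x z ∂μ := by
  have := integrable_section (μ := μ) hV hVC x
  have := integrable_section (μ := μ) hV hVC y
  have : Integrable (fun z ↦ V y z * V x z) μ :=
    Measurable.integrable_of_norm_le (by fun_prop) fun z ↦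
      norm_mul_le_of_le (hVC y z) (hVC x z)
  simp (disch := fun_prop) only [integral_add, integral_sub, integral_const_mul, integral_const,
    probReal_univ, one_smul, degree]

lemma integral_goodman_middle (hV : Measurable (uncurry V)) (hVC : ∀ x y, ‖V x y‖ ≤ C)
    (hsymm : ∀ x y, V x y = V y x) (c : ℝ) (x : α) :
    ∫ y, (c - V x y) * (c - degree μ V x - degree μ V y) + ∫ z, V y z * V x z ∂μ ∂μ =
      (c - degree μ V x) ^ 2 - c * ∫ y, degree μ V y ∂μ +
        2 * ∫ y, V x y * degree μ V y ∂μ := by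
  set g := degree μ V
  have hg : Measurable g := measurable_degree hV
  have := integrable_section (μ := μ) hV hVC x
  have := integrable_degree (μ := μ) hV hVC
  have : Integrable (fun y ↦ V x y * g y) μ :=
    Measurable.integrable_of_norm_le (by fun_prop) fun y ↦
      norm_mul_le_of_le (hVC x y) (norm_degree_le hVC y)
  have : Integrable (fun y ↦ ∫ z, V y z * V x z ∂μ) μ :=
    (measurable_integral_right (by fun_prop)).integrable_of_norm_le fun y ↦
      norm_integral_le_of_forall_norm_le fun z ↦ norm_mul_le_of_le (hVC y z) (hVC x z)
  have expand (y : α) : (c - V x y) * (c - g x - g y) =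
      (c - g x) * (c - V x y) - c * g y + V x y * g y := by ring
  simp_rw [expand]
  simp (disch := fun_prop) only [integral_add, integral_sub, integral_const_mul, integral_const,
    probReal_univ, one_smul]
  rw [integral_integral_mul_eq_integral_mul_degree hV hVC hsymm (by fun_prop) (hVC x)]
  simp only [g, degree]
  ring

lemma integral_goodman_outer (hV : Measurable (uncurry V)) (hVC : ∀ x y, ‖V x y‖ ≤ C)
    (hsymm : ∀ x y, V x y = V y x) (c : ℝ) :
    ∫ x, (c - degree μ V x) ^ 2 - c * ∫ y, degree μ V y ∂μ +
        2 * ∫ y, V x y * degree μ V y ∂μ ∂μ =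
      c ^ 2 - 3 * c * ∫ x, degree μ V x ∂μ + 3 * ∫ x, degree μ V x ^ 2 ∂μ := by
  set g := degree μ V
  have hg : Measurable g := measurable_degree hV
  have := integrable_degree (μ := μ) hV hVC
  have : Integrable (fun x ↦ g x ^ 2) μ :=
    Measurable.integrable_of_norm_le (by fun_prop) fun x ↦ by
      rw [norm_pow]
      exact pow_le_pow_left₀ (norm_nonneg _) (norm_degree_le hVC x) 2
  have : Integrable (fun x ↦ ∫ y, V x y * g y ∂μ) μ :=
    (measurable_integral_right (by fun_prop)).integrable_of_norm_le fun x ↦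
      norm_integral_le_of_forall_norm_le fun y ↦
        norm_mul_le_of_le (hVC x y) (norm_degree_le hVC y)
  have expand (x : α) : (c - g x) ^ 2 = c ^ 2 - 2 * c * g x + g x ^ 2 := by ring
  simp_rw [expand]
  simp (disch := fun_prop) only [integral_add, integral_sub, integral_const_mul, integral_const,
    probReal_univ, one_smul]
  rw [integral_integral_mul_eq_integral_mul_degree hV hVC hsymm hg (norm_degree_le hVC)]
  simp only [g, ← sq]
  ring

theorem triangleDensity_const_sub_add (hV : Measurable (uncurry V))
    (hVC : ∀ x y, ‖V x y‖ ≤ C) (hsymm : ∀ x y, V x y = V y x) (c : ℝ) :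
    triangleDensity μ (fun x y ↦ c - V x y) + triangleDensity μ V =
      c * (c ^ 2 - 3 * c * ∫ x, degree μ V x ∂μ + 3 * ∫ x, degree μ V x ^ 2 ∂μ) := by
  have hcVC x y : ‖c - V x y‖ ≤ ‖c‖ + C := (norm_sub_le _ _).trans (by gcongr; exact hVC x y)
  have hcV := integrable_triangle (μ := μ) (V := fun x y ↦ c - V x y) (by fun_prop) hcVC
  have hV' := integrable_triangle (μ := μ) hV hVC
  have pointwise (a b e : ℝ) : (c - a) * (c - b) * (c - e) + a * b * e =
      c * ((c - a) * (c - b - e) + e * b) := by ring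
  rw [triangleDensity_eq_integral_prod (by fun_prop) hcVC, triangleDensity_eq_integral_prod hV hVC,
    ← integral_add hcV hV', integral_prod_prod (hcV.fun_add hV')]
  simp only [pointwise, integral_const_mul, integral_goodman_inner hV hVC,
    integral_goodman_middle hV hVC hsymm, integral_goodman_outer hV hVC hsymm]

theorem triangleDensity_const_sub_add_ge (hV : Measurable (uncurry V))
    (hVC : ∀ x y, ‖V x y‖ ≤ C) (hsymm : ∀ x y, V x y = V y x) {c : ℝ} (hc : 0 ≤ c) :
    c ^ 3 / 4 ≤ triangleDensity μ (fun x y ↦ c - V x y) + triangleDensity μ V := by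
  rw [triangleDensity_const_sub_add hV hVC hsymm]
  have hdeg : MemLp (degree μ V) 2 μ :=
    .of_bound (measurable_degree hV).aestronglyMeasurable C (.of_forall (norm_degree_le hVC))
  nlinarith [mul_nonneg hc (sq_nonneg (∫ x, degree μ V x ∂μ - c / 2)),
    mul_le_mul_of_nonneg_left (sq_integral_le_integral_sq hdeg) hc]

end Graphon

open Graphon

instance isProbabilityMeasure_restrict_I01 : IsProbabilityMeasure (volume.restrict I01) :=
  ⟨by simp [I01]⟩

lemma tK3_eq_triangleDensity (W : ℝ → ℝ → ℝ) :
    tK3 W = triangleDensity (volume.restrict I01) W :=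
  rfl

theorem stmt_19 (q : ℝ) (hq : q ∈ Set.Icc (0 : ℝ) 1)
    (W : ℝ → ℝ → ℝ)
    (hrange : ∀ x y, W x y ∈ Set.Icc (0 : ℝ) 1)
    (hsymm : ∀ x y, W x y = W y x)
    (hmeas : Measurable (Function.uncurry W)) :
    tK3 (fun x y => max (2 * q - W x y) 0) ≥ 2 * q ^ 3 - tK3 W := by
  set V : ℝ → ℝ → ℝ := fun x y ↦ min (W x y) (2 * q)
  have hV : Measurable (uncurry V) := hmeas.min measurable_const
  have hV0 x y : 0 ≤ V x y := le_min (hrange x y).1 (by linarith [hq.1])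
  have hVW x y : V x y ≤ W x y := min_le_left _ _
  have hW1 x y : ‖W x y‖ ≤ 1 := by rw [Real.norm_of_nonneg (hrange x y).1]; exact (hrange x y).2
  have hV1 x y : ‖V x y‖ ≤ 1 :=
    (Real.norm_of_nonneg (hV0 x y)).trans_le ((hVW x y).trans (hrange x y).2)
  have hcut : (fun x y ↦ max (2 * q - W x y) 0) = fun x y ↦ 2 * q - V x y := by
    funext x y
    rw [← sub_self (2 * q), max_sub_sub_left]
  have hgoodman := triangleDensity_const_sub_add_ge (μ := volume.restrict I01) hV hV1
    (fun x y ↦ by simp only [V, hsymm x y]) (by linarith [hq.1] : 0 ≤ 2 * q)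
  have hmono := triangleDensity_mono (μ := volume.restrict I01) hV hmeas hV0 hVW hW1
  rw [hcut, tK3_eq_triangleDensity, tK3_eq_triangleDensity]
  linarith
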